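/- Suppose the random walk on T is transient, every nonzero one-step transition probability of the walk is at least ε₀ for some ε₀ > 0, Q is positive recurrent with invariant probability measure ν, and the spectral radius of the walk is strictly smaller than 1. Then Λ < ∞. -/

import Mathlib

open Filter Topology MeasureTheory Set
open scoped ENNReal NNReal Classical

/-- Vertices of the directed cover of the directed graph `(V, E)` rooted at `i₀`:
finite directed paths in `G` starting at `i₀`. -/
def Cover (V : Type) (E : V → V → Prop) (i₀ : V) : Type :=
  {l : List V // List.Chain E i₀ l}

namespace Cover

variable {V : Type} {E : V → V → Prop} {i₀ : V}

instance : MeasurableSpace (Cover V E i₀) := ⊤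

/-- The root of the directed cover: the trivial path. -/
def root : Cover V E i₀ := ⟨[], List.Chain.nil⟩

/-- The label of a cover vertex: the endpoint of the corresponding path in `G`. -/
def lbl (x : Cover V E i₀) : V := x.val.getLastD i₀

/-- The height of a cover vertex: the graph distance in the tree from the root. -/
def ht (x : Cover V E i₀) : ℕ := x.val.length

/-- `y.IsChildOf x` holds iff `y` is a direct descendant (successor) of `x` in the tree. -/
def IsChildOf (y x : Cover V E i₀) : Prop := ∃ j : V, y.val = x.val ++ [j]

end Cover

/-- One-step transition probabilities of the nearest-neighbour random walk on the
directed cover, with forward probabilities `pf` (on labels), backward probabilities `pm`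
and a loop at the root. -/
noncomputable def coverP {V : Type} (E : V → V → Prop) (i₀ : V)
    (pf : V → V → ℝ) (pm : V → ℝ) (x y : Cover V E i₀) : ℝ :=
  if Cover.IsChildOf y x then pf x.lbl y.lbl
  else if x.val = [] ∧ y.val = [] then pm i₀
  else if Cover.IsChildOf x y then pm x.lbl
  else 0

/-- `n`-step transition probabilities of the Markov chain with one-step kernel `p`. -/
noncomputable def kpow {S : Type} (p : S → S → ℝ) : ℕ → S → S → ℝ
  | 0 => fun x y => if x = y then 1 else 0
  | n + 1 => fun x y => ∑' z : S, p x z * kpow p n z y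

/-- Taboo probabilities: `taboo p w n x y` is the probability that the Markov chain with
one-step kernel `p` started at `x` is at `y` at time `n`, avoiding `w` at all times `m < n`. -/
noncomputable def taboo {S : Type} (p : S → S → ℝ) (w : S) : ℕ → S → S → ℝ
  | 0 => fun x y => if x = y then 1 else 0
  | n + 1 => fun x y => if x = w then 0 else ∑' z : S, p x z * taboo p w n z y

/-- The probability that the Markov chain with kernel `p` started at `o` returns to `o`
(the sum over `n` of the probabilities of a first return at time `n + 1`). -/
noncomputable def returnProbA {S : Type} (p : S → S → ℝ) (o : S) : ℝ≥0∞ :=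
  ∑' n : ℕ, ENNReal.ofReal (∑' z : S, p o z * taboo p o n z o)

/-- The upper Collatz–Wielandt number `λ⁺(M)` of a nonnegative matrix `M`. -/
noncomputable def lambdaPlus {V : Type} (M : V → V → ℝ) : ℝ :=
  sSup {lam : ℝ | 0 < lam ∧ ∃ f : V → ℝ, (∀ i, 0 ≤ f i) ∧ f ≠ 0 ∧
    BddAbove (Set.range f) ∧ ∀ i, lam * f i ≤ ∑' j : V, M i j * f j}

/-- The `ℓ∞`-spectral radius `r∞(M) = lim_n ‖Mⁿ‖_∞^(1/n)` of a nonnegative matrix `M`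
(the limit exists; it is expressed via `limsup`). -/
noncomputable def rInfty {V : Type} (M : V → V → ℝ) : ℝ :=
  Filter.limsup (fun n : ℕ => (⨆ i : V, ∑' j : V, kpow M n i j) ^ ((n : ℝ)⁻¹)) Filter.atTop

/-- `(Ω, P, X)` is a realization of the nearest-neighbour random walk on the directed cover
started at the root: the finite-dimensional distributions are the Markovian ones given by the
kernel `coverP E i₀ pf pm` and starting point `Cover.root`. -/
def IsCoverWalk {V : Type} (E : V → V → Prop) (i₀ : V) (pf : V → V → ℝ) (pm : V → ℝ)
    {Ω : Type} [MeasurableSpace Ω] (P : Measure Ω) (X : ℕ → Ω → Cover V E i₀) : Prop :=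
  (∀ n, Measurable (X n)) ∧
  ∀ (n : ℕ) (path : ℕ → Cover V E i₀),
    P {ω | ∀ k ≤ n, X k ω = path k} =
      (if path 0 = Cover.root then 1 else 0) *
        ∏ k ∈ Finset.range n, ENNReal.ofReal (coverP E i₀ pf pm (path k) (path (k + 1)))

/-- The length of a path (given by its list of labels, with previous vertex `prev`)
with respect to the weight function `w` on the edges of `G`. -/
noncomputable def pathLen {V : Type} (w : V → V → ℝ) : V → List V → ℝ
  | _, [] => 0
  | prev, j :: rest => w prev j + pathLen w j rest

/-- `Λ = Σ_i ν(i)·F'(-i|1)/F(-i)`, built from the coefficients `Fc i n` of the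
first-descent generating functions `F(-i|z)` (so that `F(-i|1) = Σ_n Fc i n` and
`F'(-i|1) = Σ_n n·Fc i n`). -/
noncomputable def LambdaDC {V : Type} (ν : V → ℝ) (Fc : V → ℕ → ℝ) : ℝ≥0∞ :=
  ∑' i : V, ENNReal.ofReal (ν i) *
    ((∑' n : ℕ, (n : ℝ≥0∞) * ENNReal.ofReal (Fc i n)) / ENNReal.ofReal (∑' n : ℕ, Fc i n))

/-- Positive recurrence of the countable Markov chain with transition matrix `q`:
from every state the chain returns to it with probability one and the expected return
time is finite. -/
def MCPosRec {V : Type} (q : V → V → ℝ) : Prop :=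
  ∀ i : V, (∑' n : ℕ, ∑' z : V, q i z * taboo q i n z i) = 1 ∧
    (∑' n : ℕ, ((n : ℝ≥0∞) + 1) * ENNReal.ofReal (∑' z : V, q i z * taboo q i n z i)) < ⊤

/-!
Since the spectral radius is `< 1`, the Green function `G(o, o | z)` converges at some `z > 1`.
Every tree edge has probability at least `ε₀` in both directions, so going from the root up to a
vertex `v` and back shows that `G(v, v | z)` is finite as well. The renewal equation
`G(v, v | z) = 1 + z Σ_w p(v, w) F(w, v | z) G(v, v | z)` then forces `p(v, x) F(x, v | z) ≤ 1`
for every child `x` of `v`, i.e. `F(-i | z) ≤ 1 / ε₀` uniformly in `i`. Hence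
`F'(-i | 1) ≤ F(-i | z) / (z - 1)` is bounded uniformly, while `F(-i) ≥ p(-i) > ε`, so every
ratio in `Λ` is bounded by one constant, and `Λ` is finite because `ν` is a probability vector.
-/

section Kernel

variable {S : Type}

/-- `ℝ≥0∞`-valued counterparts of `kpow` and `taboo`: here every series converges and sums can be
rearranged freely; `ofReal_kpow` and `ofReal_taboo` transfer the results back. -/
noncomputable def kpowENN (p : S → S → ℝ≥0∞) : ℕ → S → S → ℝ≥0∞
  | 0 => fun x y => if x = y then 1 else 0
  | n + 1 => fun x y => ∑' z : S, p x z * kpowENN p n z y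

noncomputable def tabooENN (p : S → S → ℝ≥0∞) (w : S) : ℕ → S → S → ℝ≥0∞
  | 0 => fun x y => if x = y then 1 else 0
  | n + 1 => fun x y => if x = w then 0 else ∑' z : S, p x z * tabooENN p w n z y

variable (p : S → S → ℝ≥0∞)

lemma kpowENN_add (a b : ℕ) (x y : S) :
    kpowENN p (a + b) x y = ∑' z, kpowENN p a x z * kpowENN p b z y := by
  induction a generalizing x with
  | zero => simp [kpowENN, ite_mul]
  | succ a ih =>
    rw [Nat.add_right_comm]
    simp only [kpowENN, ih, ← ENNReal.tsum_mul_left, ← ENNReal.tsum_mul_right, mul_assoc]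
    exact ENNReal.tsum_comm

lemma kpowENN_succ_right (n : ℕ) (x y : S) :
    kpowENN p (n + 1) x y = ∑' z, kpowENN p n x z * p z y := by
  rw [kpowENN_add p n 1]
  simp [kpowENN, mul_ite]

variable {p}

lemma kpowENN_le_one (hrow : ∀ x, ∑' y, p x y ≤ 1) (n : ℕ) (x y : S) :
    kpowENN p n x y ≤ 1 := by
  induction n generalizing x with
  | zero => simp only [kpowENN]; split_ifs <;> simp
  | succ n ih =>
    calc kpowENN p (n + 1) x y ≤ ∑' z, p x z * 1 :=
          ENNReal.tsum_le_tsum fun z => by gcongr; exact ih z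
      _ ≤ 1 := by simpa using hrow x

lemma tabooENN_le_kpowENN (w : S) (n : ℕ) (x y : S) :
    tabooENN p w n x y ≤ kpowENN p n x y := by
  induction n generalizing x with
  | zero => simp [tabooENN, kpowENN]
  | succ n ih =>
    simp only [tabooENN, kpowENN]
    split_ifs
    · exact zero_le
    · exact ENNReal.tsum_le_tsum fun z => by gcongr; exact ih z

lemma kpowENN_eq_sum_tabooENN (v : S) (n : ℕ) (x : S) :
    kpowENN p n x v =
      ∑ m ∈ Finset.range (n + 1), tabooENN p v m x v * kpowENN p (n - m) v v := by
  induction n generalizing x with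
  | zero => simp [kpowENN, tabooENN]
  | succ n ih =>
    rw [Finset.sum_range_succ']
    by_cases hx : x = v
    · subst hx
      simp [tabooENN]
    · simp only [tabooENN, if_neg hx, kpowENN, ih, Finset.mul_sum, Nat.add_sub_add_right]
      rw [Summable.tsum_finsetSum fun _ _ => ENNReal.summable]
      simp [← ENNReal.tsum_mul_right, mul_assoc]

end Kernel

theorem ENNReal.tsum_mul_tsum_eq_tsum_sum_range (f g : ℕ → ℝ≥0∞) :
    (∑' n, f n) * ∑' n, g n = ∑' n, ∑ k ∈ Finset.range (n + 1), f k * g (n - k) := by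
  simp_rw [← Finset.Nat.sum_antidiagonal_eq_sum_range_succ fun k l => f k * g l,
    ← ENNReal.tsum_mul_right, ← ENNReal.tsum_mul_left, ← ENNReal.tsum_prod,
    ← Finset.HasAntidiagonal.sigmaAntidiagonalEquivProd.tsum_eq, ENNReal.tsum_sigma']
  refine tsum_congr fun n => ?_
  rw [tsum_fintype, ← Finset.sum_coe_sort (Finset.HasAntidiagonal.antidiagonal n)]
  rfl

section Green

variable {S : Type} (p : S → S → ℝ≥0∞) (v : S) (Z : ℝ≥0∞)

noncomputable def greenENN : ℝ≥0∞ := ∑' n : ℕ, kpowENN p n v v * Z ^ n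

noncomputable def firstPassageENN (w : S) : ℝ≥0∞ := ∑' n : ℕ, tabooENN p v n w v * Z ^ n

lemma tsum_kpowENN_mul_pow (w : S) :
    ∑' n : ℕ, kpowENN p n w v * Z ^ n = firstPassageENN p v Z w * greenENN p v Z := by
  rw [firstPassageENN, greenENN, ENNReal.tsum_mul_tsum_eq_tsum_sum_range]
  refine tsum_congr fun n => ?_
  rw [kpowENN_eq_sum_tabooENN, Finset.sum_mul]
  refine Finset.sum_congr rfl fun m hm => ?_
  rw [← pow_mul_pow_sub Z (Finset.mem_range_succ_iff.1 hm)]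
  ring

lemma greenENN_eq_one_add : greenENN p v Z =
    1 + (Z * ∑' w, p v w * firstPassageENN p v Z w) * greenENN p v Z := by
  conv_lhs => rw [greenENN, tsum_eq_zero_add' ENNReal.summable]
  simp only [kpowENN, if_true, pow_zero, mul_one]
  congr 1
  calc ∑' n, (∑' w, p v w * kpowENN p n w v) * Z ^ (n + 1)
      = ∑' n, ∑' w, p v w * Z * (kpowENN p n w v * Z ^ n) := by
        refine tsum_congr fun n => ?_
        rw [← ENNReal.tsum_mul_right]
        exact tsum_congr fun w => by ring
    _ = ∑' w, p v w * Z * (firstPassageENN p v Z w * greenENN p v Z) := by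
        rw [ENNReal.tsum_comm]
        simp_rw [ENNReal.tsum_mul_left, tsum_kpowENN_mul_pow]
    _ = (Z * ∑' w, p v w * firstPassageENN p v Z w) * greenENN p v Z := by
        rw [← ENNReal.tsum_mul_left, ← ENNReal.tsum_mul_right]
        exact tsum_congr fun w => by ring

lemma mul_tsum_mul_firstPassageENN_le_one (hG : greenENN p v Z ≠ ⊤) :
    Z * ∑' w, p v w * firstPassageENN p v Z w ≤ 1 := by
  have h := greenENN_eq_one_add p v Z
  have hG0 : greenENN p v Z ≠ 0 := by rw [h]; simp
  refine (ENNReal.mul_le_mul_iff_left hG0 hG).1 ?_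
  rw [one_mul]
  conv_rhs => rw [h]
  exact le_add_self

variable {p v Z}

lemma firstPassageENN_le_inv (hG : greenENN p v Z ≠ ⊤) (hZ : 1 ≤ Z) {e : ℝ≥0∞} {x : S}
    (he : e ≤ p v x) : firstPassageENN p v Z x ≤ e⁻¹ := by
  rw [ENNReal.le_inv_iff_mul_le, mul_comm]
  calc e * firstPassageENN p v Z x ≤ p v x * firstPassageENN p v Z x := by gcongr
    _ ≤ ∑' w, p v w * firstPassageENN p v Z w := ENNReal.le_tsum x
    _ ≤ Z * ∑' w, p v w * firstPassageENN p v Z w := le_mul_of_one_le_left' hZ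
    _ ≤ 1 := mul_tsum_mul_firstPassageENN_le_one p v Z hG

lemma greenENN_ne_top_of_le_kpowENN (hZ : 1 ≤ Z) {u : S} {a b : ℝ≥0∞} {k l : ℕ}
    (ha : a ≠ 0) (hb : b ≠ 0) (hab : a ≤ kpowENN p k u v) (hba : b ≤ kpowENN p l v u)
    (hG : greenENN p u Z ≠ ⊤) : greenENN p v Z ≠ ⊤ := by
  have hterm : ∀ n, a * b * (kpowENN p n v v * Z ^ n) ≤
      kpowENN p (k + n + l) u u * Z ^ (k + n + l) := by
    intro n
    have hpath : a * (kpowENN p n v v * b) ≤ kpowENN p (k + n + l) u u := by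
      rw [add_assoc, kpowENN_add]
      refine le_trans ?_ (ENNReal.le_tsum v)
      gcongr
      rw [kpowENN_add]
      exact le_trans (by gcongr) (ENNReal.le_tsum v)
    calc a * b * (kpowENN p n v v * Z ^ n) = a * (kpowENN p n v v * b) * Z ^ n := by ring
      _ ≤ _ := by gcongr; omega
  have hle : a * b * greenENN p v Z ≤ greenENN p u Z := by
    rw [greenENN, greenENN, ← ENNReal.tsum_mul_left]
    refine (ENNReal.tsum_le_tsum hterm).trans ?_
    exact ENNReal.tsum_comp_le_tsum_of_injective (fun m n h => by simpa using h)
      (fun m => kpowENN p m u u * Z ^ m)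
  intro htop
  rw [htop, ENNReal.mul_top (mul_ne_zero ha hb), top_le_iff] at hle
  exact hG hle

end Green

section OfReal

variable {S : Type} {p : S → S → ℝ} (hp : ∀ x y, 0 ≤ p x y)
  (hrow : ∀ x, ∑' y, ENNReal.ofReal (p x y) ≤ 1)
include hp hrow

lemma kpow_eq_toReal_kpowENN (n : ℕ) (x y : S) :
    kpow p n x y = (kpowENN (fun x y => ENNReal.ofReal (p x y)) n x y).toReal := by
  induction n generalizing x with
  | zero => simp only [kpow, kpowENN]; split_ifs <;> simp
  | succ n ih =>
    simp only [kpow, kpowENN]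
    rw [ENNReal.tsum_toReal_eq fun z => ENNReal.mul_ne_top ENNReal.ofReal_ne_top
      (ne_top_of_le_ne_top ENNReal.one_ne_top (kpowENN_le_one hrow n z y))]
    simp [ih, ENNReal.toReal_ofReal (hp _ _)]

lemma taboo_eq_toReal_tabooENN (w : S) (n : ℕ) (x y : S) :
    taboo p w n x y = (tabooENN (fun x y => ENNReal.ofReal (p x y)) w n x y).toReal := by
  induction n generalizing x with
  | zero => simp only [taboo, tabooENN]; split_ifs <;> simp
  | succ n ih =>
    simp only [taboo, tabooENN]
    split_ifs
    · simp
    rw [ENNReal.tsum_toReal_eq fun z => ENNReal.mul_ne_top ENNReal.ofReal_ne_top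
      (ne_top_of_le_ne_top ENNReal.one_ne_top
        ((tabooENN_le_kpowENN w n z y).trans (kpowENN_le_one hrow n z y)))]
    simp [ih, ENNReal.toReal_ofReal (hp _ _)]

lemma kpow_nonneg (n : ℕ) (x y : S) : 0 ≤ kpow p n x y :=
  (kpow_eq_toReal_kpowENN hp hrow n x y).symm ▸ ENNReal.toReal_nonneg

lemma taboo_nonneg (w : S) (n : ℕ) (x y : S) : 0 ≤ taboo p w n x y :=
  (taboo_eq_toReal_tabooENN hp hrow w n x y).symm ▸ ENNReal.toReal_nonneg

lemma ofReal_kpow (n : ℕ) (x y : S) :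
    ENNReal.ofReal (kpow p n x y) = kpowENN (fun x y => ENNReal.ofReal (p x y)) n x y := by
  rw [kpow_eq_toReal_kpowENN hp hrow,
    ENNReal.ofReal_toReal (ne_top_of_le_ne_top ENNReal.one_ne_top (kpowENN_le_one hrow n x y))]

lemma ofReal_taboo (w : S) (n : ℕ) (x y : S) :
    ENNReal.ofReal (taboo p w n x y) = tabooENN (fun x y => ENNReal.ofReal (p x y)) w n x y := by
  rw [taboo_eq_toReal_tabooENN hp hrow, ENNReal.ofReal_toReal (ne_top_of_le_ne_top
    ENNReal.one_ne_top ((tabooENN_le_kpowENN w n x y).trans (kpowENN_le_one hrow n x y)))]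

lemma kpow_le_one (n : ℕ) (x y : S) : kpow p n x y ≤ 1 := by
  rw [← ENNReal.ofReal_le_one, ofReal_kpow hp hrow]
  exact kpowENN_le_one hrow n x y

end OfReal

lemma taboo_one {S : Type} (p : S → S → ℝ) {w x : S} (hx : x ≠ w) (y : S) :
    taboo p w 1 x y = p x y := by
  simp [taboo, hx]

section Series

lemma tsum_ofReal_eq_one {ι : Type*} {f : ι → ℝ} (hf : ∀ i, 0 ≤ f i) (h : ∑' i, f i = 1) :
    ∑' i, ENNReal.ofReal (f i) = 1 := by
  have hs : Summable f := by
    by_contra hs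
    simp [tsum_eq_zero_of_not_summable hs] at h
  rw [← ENNReal.ofReal_tsum_of_nonneg hf hs, h, ENNReal.ofReal_one]

lemma exists_one_lt_tsum_ofReal_mul_pow_ne_top {a : ℕ → ℝ} (ha0 : ∀ n, 0 ≤ a n)
    (ha1 : ∀ n, a n ≤ 1) (h : limsup (fun n : ℕ => a n ^ ((n : ℝ)⁻¹)) atTop < 1) :
    ∃ z : ℝ, 1 < z ∧ ∑' n, ENNReal.ofReal (a n) * ENNReal.ofReal z ^ n ≠ ⊤ := by
  obtain ⟨r, hLr, hr1⟩ := exists_between (max_lt h zero_lt_one)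
  have hr0 : 0 < r := (le_max_right _ _).trans_lt hLr
  obtain ⟨z, hz1, hzr⟩ := exists_between ((one_lt_inv₀ hr0).2 hr1)
  have hz0 : 0 ≤ z := by linarith
  have hrz : r * z < 1 := by
    calc r * z < r * r⁻¹ := by gcongr
      _ = 1 := mul_inv_cancel₀ hr0.ne'
  have hbdd : IsBoundedUnder (· ≤ ·) atTop fun n : ℕ => a n ^ ((n : ℝ)⁻¹) :=
    isBoundedUnder_of ⟨1, fun n => Real.rpow_le_one (ha0 n) (ha1 n) (by positivity)⟩
  have hroot : ∀ᶠ n : ℕ in atTop, a n ^ ((n : ℝ)⁻¹) < r :=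
    eventually_lt_of_limsup_lt ((le_max_left _ _).trans_lt hLr) hbdd
  have hsum : Summable fun n => a n * z ^ n := by
    refine Summable.of_norm_bounded_eventually_nat
      (summable_geometric_of_lt_one (by positivity) hrz) ?_
    filter_upwards [hroot, eventually_ge_atTop 1] with n hn hn1
    rw [Real.norm_of_nonneg (by have := ha0 n; positivity), mul_pow]
    gcongr
    calc a n = (a n ^ ((n : ℝ)⁻¹)) ^ n :=
          (Real.rpow_inv_natCast_pow (ha0 n) (by omega)).symm
      _ ≤ r ^ n := by gcongr; exact Real.rpow_nonneg (ha0 n) _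
  refine ⟨z, hz1, ?_⟩
  simp_rw [← ENNReal.ofReal_pow hz0, ← ENNReal.ofReal_mul (ha0 _),
    ← ENNReal.ofReal_tsum_of_nonneg (fun n => mul_nonneg (ha0 n) (pow_nonneg hz0 n)) hsum]
  exact ENNReal.ofReal_ne_top

lemma natCast_le_ofReal_inv_sub_one_mul_pow {z : ℝ} (hz : 1 < z) (n : ℕ) :
    (n : ℝ≥0∞) ≤ ENNReal.ofReal (z - 1)⁻¹ * ENNReal.ofReal z ^ n := by
  have hz1 : 0 < z - 1 := by linarith
  have hbern : 1 + n * (z - 1) ≤ (1 + (z - 1)) ^ n := one_add_mul_le_pow (by linarith) n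
  rw [add_sub_cancel] at hbern
  rw [← ENNReal.ofReal_natCast, ← ENNReal.ofReal_pow (by linarith),
    ← ENNReal.ofReal_mul (by positivity)]
  refine ENNReal.ofReal_le_ofReal ?_
  rw [inv_mul_eq_div, le_div_iff₀ hz1]
  linarith

lemma tsum_natCast_mul_div_tsum_le {f : ℕ → ℝ} (hf : ∀ n, 0 ≤ f n) {z : ℝ} (hz : 1 < z)
    {B : ℝ≥0∞} (hB : ∑' n, ENNReal.ofReal (f n) * ENNReal.ofReal z ^ n ≤ B) (hBtop : B ≠ ⊤)
    {c : ℝ} {k : ℕ} (hk : c ≤ f k) :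
    (∑' n : ℕ, (n : ℝ≥0∞) * ENNReal.ofReal (f n)) / ENNReal.ofReal (∑' n, f n) ≤
      ENNReal.ofReal (z - 1)⁻¹ * B / ENNReal.ofReal c := by
  have hZ : 1 ≤ ENNReal.ofReal z := ENNReal.one_le_ofReal.2 hz.le
  have hmoment : ∑' n : ℕ, (n : ℝ≥0∞) * ENNReal.ofReal (f n) ≤
      ENNReal.ofReal (z - 1)⁻¹ * B := by
    calc ∑' n : ℕ, (n : ℝ≥0∞) * ENNReal.ofReal (f n)
        ≤ ∑' n : ℕ,
            ENNReal.ofReal (z - 1)⁻¹ * (ENNReal.ofReal (f n) * ENNReal.ofReal z ^ n) :=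
          ENNReal.tsum_le_tsum fun n =>
            (mul_le_mul_left (natCast_le_ofReal_inv_sub_one_mul_pow hz n) _).trans_eq (by ring)
      _ ≤ _ := by rw [ENNReal.tsum_mul_left]; gcongr
  have hsum : Summable f := by
    have hfin : ∑' n, ENNReal.ofReal (f n) ≠ ⊤ := ne_top_of_le_ne_top hBtop <|
      (ENNReal.tsum_le_tsum fun n => le_mul_of_one_le_right' (one_le_pow₀ hZ)).trans hB
    exact (ENNReal.summable_toReal hfin).congr fun n => ENNReal.toReal_ofReal (hf n)
  exact ENNReal.div_le_div hmoment
    (ENNReal.ofReal_le_ofReal (hk.trans (hsum.le_tsum k fun n _ => hf n)))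

lemma LambdaDC_le {V : Type} {ν : V → ℝ} (hν0 : ∀ i, 0 ≤ ν i) (hν1 : ∑' i, ν i = 1)
    {Fc : V → ℕ → ℝ} {C : ℝ≥0∞}
    (hC : ∀ i, (∑' n : ℕ, (n : ℝ≥0∞) * ENNReal.ofReal (Fc i n)) /
      ENNReal.ofReal (∑' n : ℕ, Fc i n) ≤ C) :
    LambdaDC ν Fc ≤ C :=
  calc LambdaDC ν Fc ≤ ∑' i, ENNReal.ofReal (ν i) * C := ENNReal.tsum_le_tsum fun i => by
        gcongr; exact hC i
    _ = C := by rw [ENNReal.tsum_mul_right, tsum_ofReal_eq_one hν0 hν1, one_mul]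

end Series

namespace Cover

variable {V : Type} {E : V → V → Prop} {i₀ : V} {x y : Cover V E i₀}

/-- The root is its own parent (`[].dropLast = []`), which accounts for the loop at the root. -/
def parent (x : Cover V E i₀) : Cover V E i₀ :=
  ⟨x.val.dropLast,
    List.IsChain.prefix x.2 ((List.prefix_cons_inj i₀).2 (List.dropLast_prefix _))⟩

lemma lbl_eq_of_val_eq {j : V} (h : y.val = x.val ++ [j]) : y.lbl = j := by
  simp [lbl, h]

lemma isChildOf_parent (hx : x.val ≠ []) : x.IsChildOf x.parent :=
  ⟨_, (List.dropLast_append_getLast hx).symm⟩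

lemma IsChildOf.eq_parent (h : y.IsChildOf x) : x = y.parent := by
  obtain ⟨j, hj⟩ := h
  exact Subtype.ext (by simp [parent, hj])

lemma IsChildOf.not_isChildOf (h : y.IsChildOf x) : ¬ x.IsChildOf y := by
  obtain ⟨j, hj⟩ := h
  rintro ⟨k, hk⟩
  have := congrArg List.length (hj.trans (congrArg (· ++ [j]) hk))
  simp at this

lemma IsChildOf.ne (h : y.IsChildOf x) : y ≠ x := by
  obtain ⟨j, hj⟩ := h
  rintro rfl
  simpa using congrArg List.length hj

lemma IsChildOf.rel_lbl (h : y.IsChildOf x) : E x.lbl y.lbl := by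
  obtain ⟨j, hj⟩ := h
  have hchain : List.IsChain E ((i₀ :: x.val) ++ [j]) := by
    have := y.2
    rw [hj] at this
    exact this
  rw [lbl_eq_of_val_eq hj, lbl, ← List.getLast_eq_getLastD (List.cons_ne_nil _ _)]
  exact hchain.rel_getLast_head_of_append (List.cons_ne_nil _ _) (List.cons_ne_nil _ _)

lemma ht_parent (x : Cover V E i₀) : x.parent.ht = x.ht - 1 := by
  simp [parent, ht]

lemma eq_root_of_ht_eq_zero (hx : x.ht = 0) : x = root :=
  Subtype.ext (List.length_eq_zero_iff.1 hx)

lemma exists_isChildOf_lbl_eq (hconn : ∀ i j : V, Relation.ReflTransGen E i j)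
    (h₀ : ∃ j, E i₀ j) (i : V) : ∃ x v : Cover V E i₀, x.IsChildOf v ∧ x.lbl = i := by
  obtain ⟨j, hj⟩ := h₀
  obtain ⟨l, hl, hlast⟩ := List.exists_isChain_cons_of_relationReflTransGen (hconn j i)
  let x : Cover V E i₀ := ⟨j :: l, hl.cons_cons hj⟩
  refine ⟨x, x.parent, isChildOf_parent (List.cons_ne_nil _ _), ?_⟩
  rw [← hlast, List.getLast_eq_getLastD]
  exact List.getLastD_cons

end Cover

section Paths

variable {V : Type} {E : V → V → Prop} {i₀ : V} {p : Cover V E i₀ → Cover V E i₀ → ℝ≥0∞}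
  {e : ℝ≥0∞}

lemma pow_ht_le_kpowENN_from_root (he : ∀ x y : Cover V E i₀, y.IsChildOf x → e ≤ p x y)
    (v : Cover V E i₀) : e ^ v.ht ≤ kpowENN p v.ht Cover.root v := by
  induction hk : v.ht generalizing v with
  | zero => simp [Cover.eq_root_of_ht_eq_zero hk, kpowENN]
  | succ k ih =>
    have hv : v.val ≠ [] := fun h => by simp [Cover.ht, h] at hk
    calc e ^ (k + 1) = e ^ k * e := pow_succ e k
      _ ≤ kpowENN p k Cover.root v.parent * p v.parent v :=
          mul_le_mul' (ih v.parent (by simp [Cover.ht_parent, hk]))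
            (he _ _ (Cover.isChildOf_parent hv))
      _ ≤ kpowENN p (k + 1) Cover.root v := by
          rw [kpowENN_succ_right]
          exact ENNReal.le_tsum _

lemma pow_ht_le_kpowENN_to_root (he : ∀ x y : Cover V E i₀, y.IsChildOf x → e ≤ p y x)
    (v : Cover V E i₀) : e ^ v.ht ≤ kpowENN p v.ht v Cover.root := by
  induction hk : v.ht generalizing v with
  | zero => simp [Cover.eq_root_of_ht_eq_zero hk, kpowENN]
  | succ k ih =>
    have hv : v.val ≠ [] := fun h => by simp [Cover.ht, h] at hk
    calc e ^ (k + 1) = e * e ^ k := pow_succ' e k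
      _ ≤ p v v.parent * kpowENN p k v.parent Cover.root :=
          mul_le_mul' (he _ _ (Cover.isChildOf_parent hv))
            (ih v.parent (by simp [Cover.ht_parent, hk]))
      _ ≤ kpowENN p (k + 1) v Cover.root := ENNReal.le_tsum (f := fun z => p v z * _) _

end Paths

section CoverKernel

variable {V : Type} {E : V → V → Prop} {i₀ : V} {pf : V → V → ℝ} {pm : V → ℝ}
  {x y : Cover V E i₀}

lemma coverP_child (h : y.IsChildOf x) : coverP E i₀ pf pm x y = pf x.lbl y.lbl :=
  if_pos h

lemma coverP_parent (h : y.IsChildOf x) : coverP E i₀ pf pm y x = pm y.lbl := by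
  obtain ⟨j, hj⟩ := h
  rw [coverP, if_neg (Cover.IsChildOf.not_isChildOf ⟨j, hj⟩), if_neg (by simp [hj]),
    if_pos ⟨j, hj⟩]

lemma coverP_nonneg (hpf : ∀ i j, 0 ≤ pf i j) (hpm : ∀ i, 0 ≤ pm i) (x y : Cover V E i₀) :
    0 ≤ coverP E i₀ pf pm x y := by
  unfold coverP
  split_ifs <;> first | exact hpf _ _ | exact hpm _ | exact le_rfl

lemma coverP_pos_of_isChildOf (hpf : ∀ i j, E i j → 0 < pf i j) (hpm : ∀ i, 0 < pm i)
    (h : y.IsChildOf x) : 0 < coverP E i₀ pf pm x y ∧ 0 < coverP E i₀ pf pm y x := by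
  rw [coverP_child h, coverP_parent h]
  exact ⟨hpf _ _ h.rel_lbl, hpm _⟩

lemma tsum_ofReal_coverP_le (x : Cover V E i₀) :
    ∑' y, ENNReal.ofReal (coverP E i₀ pf pm x y) ≤
      ∑' j, ENNReal.ofReal (pf x.lbl j) + ENNReal.ofReal (pm x.lbl) := by
  let children : Set (Cover V E i₀) := {y | y.IsChildOf x}
  have hpoint : ∀ y, ENNReal.ofReal (coverP E i₀ pf pm x y) ≤
      children.indicator (fun y => ENNReal.ofReal (pf x.lbl y.lbl)) y +
        (Pi.single x.parent (ENNReal.ofReal (pm x.lbl)) : Cover V E i₀ → ℝ≥0∞) y := by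
    intro y
    rw [coverP]
    split_ifs with hc hroot hpar
    · exact le_add_right (by simp [children, hc])
    · have hy : y = x.parent := Subtype.ext (by simp [Cover.parent, hroot.1, hroot.2])
      have hx : x.lbl = i₀ := by simp [Cover.lbl, hroot.1]
      exact le_add_left (by simp [hy, hx])
    · exact le_add_left (by simp [← hpar.eq_parent])
    · simp
  have hinj : Function.Injective fun y : children => y.1.lbl := by
    rintro ⟨y, j, hj⟩ ⟨y', j', hj'⟩ h
    simp only [Cover.lbl_eq_of_val_eq hj, Cover.lbl_eq_of_val_eq hj'] at h
    subst h
    exact Subtype.ext (Subtype.ext (hj.trans hj'.symm))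
  calc ∑' y, ENNReal.ofReal (coverP E i₀ pf pm x y)
      ≤ ∑' y, (children.indicator (fun y => ENNReal.ofReal (pf x.lbl y.lbl)) y +
          (Pi.single x.parent (ENNReal.ofReal (pm x.lbl)) : Cover V E i₀ → ℝ≥0∞) y) :=
        ENNReal.tsum_le_tsum hpoint
    _ ≤ _ := by
      rw [ENNReal.tsum_add, tsum_pi_single, ← tsum_subtype]
      gcongr
      exact ENNReal.tsum_comp_le_tsum_of_injective hinj (fun j => ENNReal.ofReal (pf x.lbl j))

end CoverKernel

section CoverWalk

variable {V : Type} {E : V → V → Prop} {i₀ : V}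

lemma tsum_ofReal_taboo_mul_pow_le_inv {p : Cover V E i₀ → Cover V E i₀ → ℝ}
    (hp : ∀ x y, 0 ≤ p x y) (hrow : ∀ x, ∑' y, ENNReal.ofReal (p x y) ≤ 1)
    {e : ℝ≥0∞} (he : e ≠ 0) (hchild : ∀ x y : Cover V E i₀, y.IsChildOf x →
      e ≤ ENNReal.ofReal (p x y) ∧ e ≤ ENNReal.ofReal (p y x))
    {Z : ℝ≥0∞} (hZ : 1 ≤ Z)
    (hG : ∑' n, ENNReal.ofReal (kpow p n Cover.root Cover.root) * Z ^ n ≠ ⊤)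
    {x v : Cover V E i₀} (hxv : x.IsChildOf v) :
    ∑' n, ENNReal.ofReal (taboo p v n x v) * Z ^ n ≤ e⁻¹ := by
  simp_rw [ofReal_kpow hp hrow] at hG
  simp_rw [ofReal_taboo hp hrow]
  have hGv : greenENN (fun x y => ENNReal.ofReal (p x y)) v Z ≠ ⊤ :=
    greenENN_ne_top_of_le_kpowENN hZ (pow_ne_zero _ he) (pow_ne_zero _ he)
      (pow_ht_le_kpowENN_from_root (fun x y h => (hchild x y h).1) v)
      (pow_ht_le_kpowENN_to_root (fun x y h => (hchild x y h).2) v) hG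
  exact firstPassageENN_le_inv hGv hZ (hchild v x hxv).1

variable {pG : V → V → ℝ} {pm : V → ℝ} (hpm : ∀ i, 0 < pm i ∧ pm i < 1)
include hpm

lemma coverP_walk_nonneg (hpG0 : ∀ i j, 0 ≤ pG i j) (x y : Cover V E i₀) :
    0 ≤ coverP E i₀ (fun i j => (1 - pm i) * pG i j) pm x y :=
  coverP_nonneg (fun i j => mul_nonneg (sub_nonneg.2 (hpm i).2.le) (hpG0 i j))
    (fun i => (hpm i).1.le) x y

lemma tsum_ofReal_coverP_walk_le_one (hpG0 : ∀ i j, 0 ≤ pG i j)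
    (hpGsum : ∀ i, ∑' j : V, pG i j = 1) (x : Cover V E i₀) :
    ∑' y, ENNReal.ofReal (coverP E i₀ (fun i j => (1 - pm i) * pG i j) pm x y) ≤ 1 := by
  refine (tsum_ofReal_coverP_le x).trans_eq ?_
  have h1pm : 0 ≤ 1 - pm x.lbl := sub_nonneg.2 (hpm _).2.le
  simp_rw [ENNReal.ofReal_mul h1pm, ENNReal.tsum_mul_left,
    tsum_ofReal_eq_one (hpG0 _) (hpGsum _), mul_one]
  rw [← ENNReal.ofReal_add h1pm (hpm _).1.le, sub_add_cancel, ENNReal.ofReal_one]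

lemma ofReal_le_coverP_walk_of_isChildOf (hpGpos : ∀ i j, 0 < pG i j ↔ E i j) {ε₀ : ℝ}
    (hmin : ∀ x y : Cover V E i₀,
      coverP E i₀ (fun i j => (1 - pm i) * pG i j) pm x y ≠ 0 →
      ε₀ ≤ coverP E i₀ (fun i j => (1 - pm i) * pG i j) pm x y)
    {x y : Cover V E i₀} (h : y.IsChildOf x) :
    ENNReal.ofReal ε₀ ≤
        ENNReal.ofReal (coverP E i₀ (fun i j => (1 - pm i) * pG i j) pm x y) ∧
      ENNReal.ofReal ε₀ ≤
        ENNReal.ofReal (coverP E i₀ (fun i j => (1 - pm i) * pG i j) pm y x) := by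
  obtain ⟨hxy, hyx⟩ := coverP_pos_of_isChildOf
    (fun i j hij => mul_pos (sub_pos.2 (hpm i).2) ((hpGpos i j).2 hij)) (fun i => (hpm i).1) h
  exact ⟨ENNReal.ofReal_le_ofReal (hmin _ _ hxy.ne'), ENNReal.ofReal_le_ofReal (hmin _ _ hyx.ne')⟩

omit hpm in
lemma exists_rel_of_tsum_eq_one (hpG0 : ∀ i j, 0 ≤ pG i j)
    (hpGpos : ∀ i j, 0 < pG i j ↔ E i j) {i : V} (hpGsum : ∑' j : V, pG i j = 1) :
    ∃ j, E i j := by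
  by_contra! h
  have hzero : ∀ j, pG i j = 0 := fun j =>
    le_antisymm (not_lt.1 fun hp => h j ((hpGpos _ _).1 hp)) (hpG0 _ _)
  simp [hzero] at hpGsum

end CoverWalk

theorem Lambda_lt_top_of_spectral_radius_lt_one_general
    {V : Type} (E : V → V → Prop) (i₀ : V)
    (hconn : ∀ i j : V, Relation.ReflTransGen E i j)
    (pG : V → V → ℝ) (hpG0 : ∀ i j, 0 ≤ pG i j) (hpGpos : ∀ i j, 0 < pG i j ↔ E i j)
    (hpGsum : ∀ i, ∑' j : V, pG i j = 1)
    (pm : V → ℝ) (ε : ℝ) (hε0 : 0 < ε)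
    (hpm : ∀ i, ε < pm i ∧ pm i < 1 - ε)
    (ε₀ : ℝ) (hε₀ : 0 < ε₀)
    (hmin : ∀ x y : Cover V E i₀,
      coverP E i₀ (fun i j => (1 - pm i) * pG i j) pm x y ≠ 0 →
      ε₀ ≤ coverP E i₀ (fun i j => (1 - pm i) * pG i j) pm x y)
    (Fc : V → ℕ → ℝ)
    (hFc : ∀ x y : Cover V E i₀, Cover.IsChildOf x y → ∀ n : ℕ,
      Fc (Cover.lbl x) n =
        taboo (coverP E i₀ (fun i j => (1 - pm i) * pG i j) pm) y n x y)
    (ν : V → ℝ) (hν0 : ∀ i, 0 ≤ ν i) (hν1 : ∑' i : V, ν i = 1)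
    (hρ : Filter.limsup (fun n : ℕ =>
        (kpow (coverP E i₀ (fun i j => (1 - pm i) * pG i j) pm) n Cover.root Cover.root)
          ^ ((n : ℝ)⁻¹)) Filter.atTop < 1) :
    LambdaDC ν Fc < ⊤ := by
  set p := coverP E i₀ (fun i j => (1 - pm i) * pG i j) pm
  have hpm' : ∀ i, 0 < pm i ∧ pm i < 1 := fun i =>
    ⟨hε0.trans (hpm i).1, by linarith [(hpm i).2]⟩
  have hp : ∀ x y, 0 ≤ p x y := coverP_walk_nonneg hpm' hpG0
  have hrow : ∀ x, ∑' y, ENNReal.ofReal (p x y) ≤ 1 :=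
    tsum_ofReal_coverP_walk_le_one hpm' hpG0 hpGsum
  have he : ENNReal.ofReal ε₀ ≠ 0 := (ENNReal.ofReal_pos.2 hε₀).ne'
  obtain ⟨z, hz, hG⟩ := exists_one_lt_tsum_ofReal_mul_pow_ne_top
    (kpow_nonneg hp hrow · _ _) (kpow_le_one hp hrow · _ _) hρ
  refine (LambdaDC_le hν0 hν1 (C := ENNReal.ofReal (z - 1)⁻¹ * (ENNReal.ofReal ε₀)⁻¹ /
    ENNReal.ofReal ε) fun i => ?_).trans_lt (ENNReal.div_lt_top
    (ENNReal.mul_ne_top ENNReal.ofReal_ne_top (ENNReal.inv_ne_top.2 he))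
    (ENNReal.ofReal_pos.2 hε0).ne')
  obtain ⟨x, v, hxv, rfl⟩ := Cover.exists_isChildOf_lbl_eq hconn
    (exists_rel_of_tsum_eq_one hpG0 hpGpos (hpGsum i₀)) i
  refine tsum_natCast_mul_div_tsum_le (k := 1) (fun n => (hFc x v hxv n).symm ▸
    taboo_nonneg hp hrow v n x v) hz ?_ (ENNReal.inv_ne_top.2 he) ?_
  · simp_rw [hFc x v hxv]
    exact tsum_ofReal_taboo_mul_pow_le_inv hp hrow he
      (fun _ _ => ofReal_le_coverP_walk_of_isChildOf hpm' hpGpos hmin)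
      (ENNReal.one_le_ofReal.2 hz.le) hG hxv
  · rw [hFc x v hxv 1, taboo_one _ hxv.ne]
    exact (hpm _).1.le.trans_eq (coverP_parent hxv).symm

/-- **Theorem 3.2.** If the random walk on the directed cover is transient, its nonzero
one-step transition probabilities are bounded below by some `ε₀ > 0`, the exit chain `Q`
is positive recurrent with invariant probability measure `ν`, and the spectral radius of
the walk is strictly smaller than `1`, then `Λ = Σ_i ν(i) F'(-i|1)/F(-i) < ∞`. -/
theorem Lambda_lt_top_of_spectral_radius_lt_one
    {V : Type} [Countable V] (E : V → V → Prop) (i₀ : V)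
    (hconn : ∀ i j : V, Relation.ReflTransGen E i j)
    (hout : ∀ i : V, {j | E i j}.Finite) (hin : ∀ i : V, {j | E j i}.Finite)
    (D : ℕ) (hD : ∀ i : V, {j | E i j}.ncard ≤ D ∧ {j | E j i}.ncard ≤ D)
    (pG : V → V → ℝ) (hpG0 : ∀ i j, 0 ≤ pG i j) (hpGpos : ∀ i j, 0 < pG i j ↔ E i j)
    (hpGsum : ∀ i, ∑' j : V, pG i j = 1)
    (pm : V → ℝ) (ε : ℝ) (hε0 : 0 < ε) (hε1 : ε < 1)
    (hpm : ∀ i, ε < pm i ∧ pm i < 1 - ε)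
    (htrans : returnProbA (coverP E i₀ (fun i j => (1 - pm i) * pG i j) pm)
      Cover.root < 1)
    (ε₀ : ℝ) (hε₀ : 0 < ε₀)
    (hmin : ∀ x y : Cover V E i₀,
      coverP E i₀ (fun i j => (1 - pm i) * pG i j) pm x y ≠ 0 →
      ε₀ ≤ coverP E i₀ (fun i j => (1 - pm i) * pG i j) pm x y)
    (Fc Gc : V → ℕ → ℝ)
    (hFc : ∀ x y : Cover V E i₀, Cover.IsChildOf x y → ∀ n : ℕ,
      Fc (Cover.lbl x) n =
        taboo (coverP E i₀ (fun i j => (1 - pm i) * pG i j) pm) y n x y)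
    (hGc : ∀ x y : Cover V E i₀, Cover.IsChildOf x y → ∀ n : ℕ,
      Gc (Cover.lbl x) n =
        taboo (coverP E i₀ (fun i j => (1 - pm i) * pG i j) pm) y n x x)
    (q : V → V → ℝ)
    (hq : ∀ i j : V, q i j = (1 - ∑' n : ℕ, Fc j n) / (1 - ∑' n : ℕ, Fc i n) *
      ((1 - pm i) * pG i j) * (∑' n : ℕ, Gc i n))
    (ν : V → ℝ) (hν0 : ∀ i, 0 ≤ ν i) (hν1 : ∑' i : V, ν i = 1)
    (hνinv : ∀ j : V, ∑' i : V, ν i * q i j = ν j)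
    (hQposrec : MCPosRec q)
    (hρ : Filter.limsup (fun n : ℕ =>
        (kpow (coverP E i₀ (fun i j => (1 - pm i) * pG i j) pm) n Cover.root Cover.root)
          ^ ((n : ℝ)⁻¹)) Filter.atTop < 1) :
    LambdaDC ν Fc < ⊤ :=
  Lambda_lt_top_of_spectral_radius_lt_one_general E i₀ hconn pG hpG0 hpGpos hpGsum pm ε hε0 hpm ε₀
    hε₀ hmin Fc hFc ν hν0 hν1 hρ
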